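/- Let p>2 and suppose the composition operator C_φ induced by an analytic self-map φ of the unit disk is an isometry on the analytic Besov space B_p. If the range of C_φ contains a univalent function (i.e., there exists f ∈ B_p such that f∘φ is injective on 𝔻), then φ is a rotation of the disk, i.e., φ(z) = λz for some λ ∈ ℂ with |λ| = 1. -/

import Mathlib

open MeasureTheory

/-- The open unit disk in the complex plane. -/
noncomputable def unitDisk : Set ℂ := Metric.ball (0 : ℂ) 1

/-- Lebesgue area measure on ℂ normalized so that the unit disk has measure 1,
i.e., (1/π) times two-dimensional Lebesgue measure. -/
noncomputable def dA : Measure ℂ := (ENNReal.ofReal Real.pi)⁻¹ • (volume : Measure ℂ)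

/-- φ is an analytic self-map of the unit disk. -/
def IsAnalyticSelfMap (φ : ℂ → ℂ) : Prop :=
  DifferentiableOn ℂ φ unitDisk ∧ Set.MapsTo φ unitDisk unitDisk

/-- The Besov integrand ‖f'(z)‖^p (1-|z|²)^{p-2}. -/
noncomputable def besovIntegrand (p : ℝ) (f : ℂ → ℂ) (z : ℂ) : ℝ :=
  ‖deriv f z‖ ^ p * (1 - ‖z‖ ^ 2) ^ (p - 2)

/-- Membership in the analytic Besov space B_p: f is analytic on 𝔻 and the
Besov integral is finite (expressed as integrability of the nonnegative integrand). -/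
def MemBesov (p : ℝ) (f : ℂ → ℂ) : Prop :=
  DifferentiableOn ℂ f unitDisk ∧ IntegrableOn (besovIntegrand p f) unitDisk dA

/-- The Besov semi-norm ‖f‖_p = (∫_𝔻 |f'|^p (1-|z|²)^{p-2} dA)^{1/p}. -/
noncomputable def besovSemi (p : ℝ) (f : ℂ → ℂ) : ℝ :=
  (∫ z in unitDisk, besovIntegrand p f z ∂dA) ^ (1 / p)

/-- The Besov norm ‖f‖_{B_p} = |f(0)| + ‖f‖_p. -/
noncomputable def besovNorm (p : ℝ) (f : ℂ → ℂ) : ℝ := ‖f 0‖ + besovSemi p f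

/-- The composition operator C_φ is an isometry on B_p. -/
def IsBesovIsometry (p : ℝ) (φ : ℂ → ℂ) : Prop :=
  ∀ f : ℂ → ℂ, MemBesov p f → MemBesov p (f ∘ φ) ∧ besovNorm p (f ∘ φ) = besovNorm p f

/-- φ is a rotation of the disk: φ(z) = λ z for a unimodular constant λ. -/
def IsRotation (φ : ℂ → ℂ) : Prop :=
  ∃ lam : ℂ, ‖lam‖ = 1 ∧ ∀ z ∈ unitDisk, φ z = lam * z

/-!
By Schwarz–Pick, `|φ'(z)|^p (1-|z|²)^(p-2) ≤ |φ'(z)|² (1-|φ(z)|²)^(p-2)` for `p ≥ 2`, and for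
univalent `φ` the right-hand side integrates, by the change of variables `w = φ(z)`, to the integral
of the weight `(1-|w|²)^(p-2)` over `φ(𝔻) ⊆ 𝔻`; hence `‖φ‖_p ≤ ‖id‖_p`. Testing the isometry on
`z` and on `z - φ(0)` gives `φ(0) = 0` and `‖φ‖_p = ‖id‖_p`, so the pointwise inequality is an
equality, which for `p > 2` is equality in Schwarz–Pick wherever `φ' ≠ 0`. At `0` this gives
`|φ'(0)| = 1`, and the equality case of the Schwarz lemma makes `φ` a rotation.
-/

open Complex ComplexConjugate Metric Set Filter Topology

lemma one_sub_norm_sq_pos {z : ℂ} (hz : z ∈ unitDisk) : 0 < 1 - ‖z‖ ^ 2 := by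
  have := mem_ball_zero_iff.mp hz
  nlinarith [norm_nonneg z]

noncomputable def diskMobius (a z : ℂ) : ℂ := (a + z) / (1 + conj a * z)

section DiskMobius

variable {a z : ℂ}

lemma normSq_one_add_conj_mul_sub_normSq_add (a z : ℂ) :
    normSq (1 + conj a * z) - normSq (a + z) = (1 - normSq a) * (1 - normSq z) := by
  simp only [normSq_apply, add_re, add_im, mul_re, mul_im, conj_re, conj_im, one_re, one_im]
  ring

lemma normSq_add_lt_normSq_one_add_conj_mul (ha : ‖a‖ < 1) (hz : ‖z‖ < 1) :
    normSq (a + z) < normSq (1 + conj a * z) := by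
  have key := normSq_one_add_conj_mul_sub_normSq_add a z
  rw [normSq_eq_norm_sq a, normSq_eq_norm_sq z] at key
  have : 0 < (1 - ‖a‖ ^ 2) * (1 - ‖z‖ ^ 2) :=
    mul_pos (by nlinarith [norm_nonneg a]) (by nlinarith [norm_nonneg z])
  linarith

lemma one_add_conj_mul_ne_zero (ha : ‖a‖ < 1) (hz : ‖z‖ < 1) : 1 + conj a * z ≠ 0 :=
  normSq_pos.mp ((normSq_nonneg _).trans_lt (normSq_add_lt_normSq_one_add_conj_mul ha hz))

lemma mapsTo_diskMobius (ha : ‖a‖ < 1) : MapsTo (diskMobius a) (ball 0 1) (ball 0 1) := by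
  intro z hz
  rw [mem_ball_zero_iff] at hz ⊢
  have h := normSq_add_lt_normSq_one_add_conj_mul ha hz
  rw [normSq_eq_norm_sq, normSq_eq_norm_sq] at h
  rw [diskMobius, norm_div, div_lt_one (norm_pos_iff.mpr (one_add_conj_mul_ne_zero ha hz))]
  exact lt_of_pow_lt_pow_left₀ 2 (norm_nonneg _) h

lemma hasDerivAt_diskMobius (h : 1 + conj a * z ≠ 0) :
    HasDerivAt (diskMobius a) ((1 - normSq a) / (1 + conj a * z) ^ 2) z := by
  have := ((hasDerivAt_id z).const_add a).div
    (((hasDerivAt_id z).const_mul (conj a)).const_add 1) h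
  exact this.congr_deriv (by rw [← mul_conj]; simp only [id]; ring)

lemma differentiableOn_diskMobius (ha : ‖a‖ < 1) :
    DifferentiableOn ℂ (diskMobius a) (ball 0 1) := fun _z hz =>
  (hasDerivAt_diskMobius (one_add_conj_mul_ne_zero ha (mem_ball_zero_iff.mp hz))).differentiableAt
    |>.differentiableWithinAt

lemma diskMobius_zero (a : ℂ) : diskMobius a 0 = a := by simp [diskMobius]

lemma diskMobius_neg_self (a : ℂ) : diskMobius (-a) a = 0 := by simp [diskMobius]

lemma hasDerivAt_diskMobius_zero (a : ℂ) : HasDerivAt (diskMobius a) (1 - normSq a) 0 := by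
  simpa using hasDerivAt_diskMobius (a := a) (z := 0) (by simp)

lemma hasDerivAt_diskMobius_neg_self (ha : ‖a‖ < 1) :
    HasDerivAt (diskMobius (-a)) (1 - normSq a)⁻¹ a := by
  have hpos : (0 : ℝ) < 1 - normSq a := by
    rw [normSq_eq_norm_sq]; nlinarith [norm_nonneg a]
  have hden : 1 + conj (-a) * a = ((1 - normSq a : ℝ) : ℂ) := by
    rw [map_neg, neg_mul, mul_comm, mul_conj]; push_cast; ring
  have := hasDerivAt_diskMobius (a := -a) (z := a) (by rw [hden]; exact_mod_cast hpos.ne')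
  rw [hden, normSq_neg] at this
  convert this using 1
  push_cast
  field_simp [show (1 - (normSq a : ℂ)) ≠ 0 by exact_mod_cast hpos.ne']

end DiskMobius

/-- **Schwarz–Pick lemma**, infinitesimal form. -/
theorem norm_deriv_mul_le_of_mapsTo_ball {φ : ℂ → ℂ} (hd : DifferentiableOn ℂ φ (ball 0 1))
    (hm : MapsTo φ (ball 0 1) (ball 0 1)) {a : ℂ} (ha : a ∈ ball (0 : ℂ) 1) :
    ‖deriv φ a‖ * (1 - ‖a‖ ^ 2) ≤ 1 - ‖φ a‖ ^ 2 := by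
  set b := φ a
  have ha' : ‖a‖ < 1 := mem_ball_zero_iff.mp ha
  have hb : ‖b‖ < 1 := mem_ball_zero_iff.mp (hm ha)
  have hb' : ‖-b‖ < 1 := by rwa [norm_neg]
  set ψ := diskMobius (-b) ∘ φ ∘ diskMobius a
  have hψd : DifferentiableOn ℂ ψ (ball 0 1) :=
    (differentiableOn_diskMobius hb').comp (hd.comp (differentiableOn_diskMobius ha')
      (mapsTo_diskMobius ha')) (hm.comp (mapsTo_diskMobius ha'))
  have hψm : MapsTo ψ (ball 0 1) (ball 0 1) :=
    (mapsTo_diskMobius hb').comp (hm.comp (mapsTo_diskMobius ha'))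
  have hψ0 : ψ 0 = 0 := by simp [ψ, diskMobius_zero, b, diskMobius_neg_self]
  have hψ' : HasDerivAt ψ ((1 - (normSq b : ℂ))⁻¹ * (deriv φ a * (1 - normSq a))) 0 := by
    have hφ' : HasDerivAt φ (deriv φ a) (diskMobius a 0) := by
      rw [diskMobius_zero]
      exact (hd.differentiableAt (isOpen_ball.mem_nhds ha)).hasDerivAt
    exact (hasDerivAt_diskMobius_neg_self hb).comp_of_eq 0
      (hφ'.comp 0 (hasDerivAt_diskMobius_zero a)) (by simp [diskMobius_zero, b])
  have hschwarz := Complex.norm_deriv_le_one_of_mapsTo_ball hψd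
    (hψm.mono_right (by rw [hψ0]; exact ball_subset_closedBall)) one_pos
  have hr := one_sub_norm_sq_pos (hm ha)
  have hs := (one_sub_norm_sq_pos ha).le
  rw [hψ'.deriv, normSq_eq_norm_sq, normSq_eq_norm_sq] at hschwarz
  push_cast at hschwarz
  rw [norm_mul, norm_mul, norm_inv, ← ofReal_pow, ← ofReal_pow, ← ofReal_one, ← ofReal_sub,
    ← ofReal_sub, norm_real, norm_real, Real.norm_of_nonneg hr.le, Real.norm_of_nonneg hs,
    ← div_eq_inv_mul, div_le_one hr] at hschwarz
  exact hschwarz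

lemma det_restrictScalars_toSpanSingleton (c : ℂ) :
    ((ContinuousLinearMap.toSpanSingleton ℂ c).restrictScalars ℝ).det = ‖c‖ ^ 2 := by
  simp [ContinuousLinearMap.det, LinearMap.det_restrictScalars, Algebra.norm_complex_eq,
    normSq_eq_norm_sq]

section ChangeOfVariables

variable {E : Type*} [NormedAddCommGroup E] [NormedSpace ℝ E] {μ : Measure ℂ}
  [μ.IsAddHaarMeasure] {f f' : ℂ → ℂ} {s : Set ℂ}

theorem integral_image_eq_integral_norm_deriv_sq_smul (hs : MeasurableSet s)
    (hf : ∀ z ∈ s, HasDerivWithinAt f (f' z) s z) (hinj : InjOn f s) (g : ℂ → E) :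
    ∫ w in f '' s, g w ∂μ = ∫ z in s, ‖f' z‖ ^ 2 • g (f z) ∂μ := by
  simpa only [det_restrictScalars_toSpanSingleton, abs_pow, abs_norm] using
    integral_image_eq_integral_abs_det_fderiv_smul μ hs
      (fun z hz => (hf z hz).hasFDerivWithinAt.restrictScalars ℝ) hinj g

theorem integrableOn_image_iff_integrableOn_norm_deriv_sq_smul (hs : MeasurableSet s)
    (hf : ∀ z ∈ s, HasDerivWithinAt f (f' z) s z) (hinj : InjOn f s) (g : ℂ → E) :
    IntegrableOn g (f '' s) μ ↔ IntegrableOn (fun z => ‖f' z‖ ^ 2 • g (f z)) s μ := by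
  simpa only [det_restrictScalars_toSpanSingleton, abs_pow, abs_norm] using
    integrableOn_image_iff_integrableOn_abs_det_fderiv_smul μ hs
      (fun z hz => (hf z hz).hasFDerivWithinAt.restrictScalars ℝ) hinj g

end ChangeOfVariables

lemma integrableOn_one_sub_norm_sq_rpow {μ : Measure ℂ} [IsFiniteMeasureOnCompacts μ] {q : ℝ}
    (hq : 0 ≤ q) : IntegrableOn (fun z : ℂ => (1 - ‖z‖ ^ 2) ^ q) (ball 0 1) μ :=
  ((by fun_prop : Continuous fun z : ℂ => (1 - ‖z‖ ^ 2) ^ q).continuousOn.integrableOn_compact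
    (isCompact_closedBall 0 1)).mono_set ball_subset_closedBall

instance : dA.IsAddHaarMeasure :=
  .smul _ (ENNReal.inv_ne_zero.mpr ENNReal.ofReal_ne_top)
    (ENNReal.inv_ne_top.mpr (ENNReal.ofReal_pos.mpr Real.pi_pos).ne')

section Besov

variable {p : ℝ} {f g : ℂ → ℂ}

lemma besovIntegrand_id (p : ℝ) : besovIntegrand p id = fun z => (1 - ‖z‖ ^ 2) ^ (p - 2) := by
  ext z
  simp [besovIntegrand]

lemma besovIntegrand_add_const (p : ℝ) (f : ℂ → ℂ) (c : ℂ) :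
    besovIntegrand p (fun z => f z + c) = besovIntegrand p f := by
  ext z
  simp [besovIntegrand, deriv_add_const]

lemma besovIntegrand_nonneg (p : ℝ) (f : ℂ → ℂ) {z : ℂ} (hz : z ∈ unitDisk) :
    0 ≤ besovIntegrand p f z := by
  unfold besovIntegrand
  have := one_sub_norm_sq_pos hz
  positivity

lemma besovIntegrand_eq_sq_mul (hp : p ≠ 0) (f : ℂ → ℂ) {z : ℂ} (hz : z ∈ unitDisk) :
    besovIntegrand p f z = ‖deriv f z‖ ^ 2 * (‖deriv f z‖ * (1 - ‖z‖ ^ 2)) ^ (p - 2) := by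
  unfold besovIntegrand
  rcases (norm_nonneg (deriv f z)).eq_or_lt with h | h
  · simp [← h, Real.zero_rpow hp]
  · rw [Real.mul_rpow h.le (one_sub_norm_sq_pos hz).le, ← mul_assoc,
      ← Real.rpow_natCast ‖deriv f z‖ 2, ← Real.rpow_add h]
    norm_num

lemma continuousOn_besovIntegrand (hp : 0 ≤ p) (hf : DifferentiableOn ℂ f unitDisk) :
    ContinuousOn (besovIntegrand p f) unitDisk := by
  have hf' : ContinuousOn (deriv f) unitDisk :=
    (hf.analyticOnNhd isOpen_ball).deriv.continuousOn
  exact (hf'.norm.rpow_const fun _ _ => Or.inr hp).mul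
    ((by fun_prop : Continuous fun z : ℂ => 1 - ‖z‖ ^ 2).continuousOn.rpow_const
      fun z hz => Or.inl (one_sub_norm_sq_pos hz).ne')

lemma memBesov_id (hp : 2 ≤ p) : MemBesov p id :=
  ⟨differentiableOn_id, by
    rw [besovIntegrand_id]
    exact integrableOn_one_sub_norm_sq_rpow (by linarith)⟩

lemma MemBesov.add_const (hf : MemBesov p f) (c : ℂ) : MemBesov p (fun z => f z + c) :=
  ⟨hf.1.add_const c, by rw [besovIntegrand_add_const]; exact hf.2⟩

lemma besovSemi_add_const (p : ℝ) (f : ℂ → ℂ) (c : ℂ) :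
    besovSemi p (fun z => f z + c) = besovSemi p f := by
  rw [besovSemi, besovIntegrand_add_const, besovSemi]

lemma integral_besovIntegrand_eq_of_besovSemi_eq (hp : p ≠ 0)
    (h : besovSemi p f = besovSemi p g) :
    ∫ z in unitDisk, besovIntegrand p f z ∂dA = ∫ z in unitDisk, besovIntegrand p g z ∂dA :=
  Real.rpow_left_injOn (one_div_ne_zero hp)
    (setIntegral_nonneg measurableSet_ball fun _ hz => besovIntegrand_nonneg p f hz)
    (setIntegral_nonneg measurableSet_ball fun _ hz => besovIntegrand_nonneg p g hz) h

theorem IsBesovIsometry.apply_zero_eq_zero_and_besovSemi_eq {φ : ℂ → ℂ}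
    (hiso : IsBesovIsometry p φ) (hp : 2 ≤ p) :
    φ 0 = 0 ∧ besovSemi p φ = besovSemi p id := by
  have h₁ := (hiso id (memBesov_id hp)).2
  have h₂ := (hiso _ ((memBesov_id hp).add_const (-φ 0))).2
  simp only [besovNorm, Function.id_comp, id, norm_zero, zero_add] at h₁
  simp only [besovNorm, Function.comp_def, besovSemi_add_const, id_eq, add_neg_cancel,
    norm_zero, zero_add, norm_neg] at h₂
  change besovSemi p φ = ‖φ 0‖ + besovSemi p id at h₂
  have h0 : ‖φ 0‖ = 0 := by linarith
  exact ⟨norm_eq_zero.mp h0, by linarith⟩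

end Besov

section Extremal

variable {p : ℝ} {φ : ℂ → ℂ}

lemma besovIntegrand_le_of_isAnalyticSelfMap (hp : 2 ≤ p) (hφ : IsAnalyticSelfMap φ) {z : ℂ}
    (hz : z ∈ unitDisk) :
    besovIntegrand p φ z ≤ ‖deriv φ z‖ ^ 2 * (1 - ‖φ z‖ ^ 2) ^ (p - 2) := by
  rw [besovIntegrand_eq_sq_mul (by linarith) φ hz]
  have := one_sub_norm_sq_pos hz
  gcongr
  exact norm_deriv_mul_le_of_mapsTo_ball hφ.1 hφ.2 hz

lemma continuousOn_norm_deriv_sq_mul_one_sub_norm_sq_rpow (hφ : IsAnalyticSelfMap φ) (q : ℝ) :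
    ContinuousOn (fun z => ‖deriv φ z‖ ^ 2 * (1 - ‖φ z‖ ^ 2) ^ q) unitDisk :=
  ((hφ.1.analyticOnNhd isOpen_ball).deriv.continuousOn.norm.pow 2).mul
    (((by fun_prop : Continuous fun z : ℂ => 1 - ‖z‖ ^ 2).comp_continuousOn
      hφ.1.continuousOn).rpow_const fun _ hz => Or.inl (one_sub_norm_sq_pos (hφ.2 hz)).ne')

theorem besovIntegrand_eqOn_of_integral_eq {μ : Measure ℂ} [μ.IsAddHaarMeasure] (hp : 2 ≤ p)
    (hφ : IsAnalyticSelfMap φ) (hinj : InjOn φ unitDisk)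
    (hint : IntegrableOn (besovIntegrand p φ) unitDisk μ)
    (h : ∫ z in unitDisk, besovIntegrand p φ z ∂μ = ∫ z in unitDisk, besovIntegrand p id z ∂μ) :
    EqOn (besovIntegrand p φ) (fun z => ‖deriv φ z‖ ^ 2 * (1 - ‖φ z‖ ^ 2) ^ (p - 2)) unitDisk := by
  set w : ℂ → ℝ := fun z => (1 - ‖z‖ ^ 2) ^ (p - 2)
  have hderiv : ∀ z ∈ unitDisk, HasDerivWithinAt φ (deriv φ z) unitDisk z := fun z hz =>
    (hφ.1.differentiableAt (isOpen_ball.mem_nhds hz)).hasDerivAt.hasDerivWithinAt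
  have hw : IntegrableOn w unitDisk μ := integrableOn_one_sub_norm_sq_rpow (by linarith)
  have hpull : IntegrableOn (fun z => ‖deriv φ z‖ ^ 2 * w (φ z)) unitDisk μ :=
    (integrableOn_image_iff_integrableOn_norm_deriv_sq_smul measurableSet_ball hderiv hinj w).mp
      (hw.mono_set hφ.2.image_subset)
  have hle : ∀ z ∈ unitDisk, besovIntegrand p φ z ≤ ‖deriv φ z‖ ^ 2 * w (φ z) :=
    fun z hz => besovIntegrand_le_of_isAnalyticSelfMap hp hφ hz
  have hge : ∫ z in unitDisk, ‖deriv φ z‖ ^ 2 * w (φ z) ∂μ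
      ≤ ∫ z in unitDisk, besovIntegrand p φ z ∂μ :=
    calc ∫ z in unitDisk, ‖deriv φ z‖ ^ 2 * w (φ z) ∂μ = ∫ z in φ '' unitDisk, w z ∂μ :=
          (integral_image_eq_integral_norm_deriv_sq_smul measurableSet_ball hderiv hinj w).symm
      _ ≤ ∫ z in unitDisk, w z ∂μ :=
          setIntegral_mono_set hw ((ae_restrict_iff' measurableSet_ball).mpr (ae_of_all _
            fun z hz => Real.rpow_nonneg (one_sub_norm_sq_pos hz).le _))
            hφ.2.image_subset.eventuallyLE
      _ = ∫ z in unitDisk, besovIntegrand p φ z ∂μ := by rw [h, besovIntegrand_id]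
  have hae : besovIntegrand p φ =ᵐ[μ.restrict unitDisk] fun z => ‖deriv φ z‖ ^ 2 * w (φ z) :=
    (integral_eq_iff_of_ae_le hint hpull
      ((ae_restrict_iff' measurableSet_ball).mpr (ae_of_all _ hle))).mp
      ((setIntegral_mono_on hint hpull measurableSet_ball hle).antisymm hge)
  exact Measure.eqOn_open_of_ae_eq hae isOpen_ball (continuousOn_besovIntegrand (by linarith) hφ.1)
    (continuousOn_norm_deriv_sq_mul_one_sub_norm_sq_rpow hφ _)

lemma norm_deriv_mul_eq_of_besovIntegrand_eq (hp : 2 < p) {z : ℂ} (hz : z ∈ unitDisk)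
    (hφz : φ z ∈ unitDisk) (hd : deriv φ z ≠ 0)
    (h : besovIntegrand p φ z = ‖deriv φ z‖ ^ 2 * (1 - ‖φ z‖ ^ 2) ^ (p - 2)) :
    ‖deriv φ z‖ * (1 - ‖z‖ ^ 2) = 1 - ‖φ z‖ ^ 2 := by
  rw [besovIntegrand_eq_sq_mul (by linarith) φ hz] at h
  exact Real.rpow_left_injOn (sub_ne_zero.mpr hp.ne')
    (mul_nonneg (norm_nonneg _) (one_sub_norm_sq_pos hz).le) (one_sub_norm_sq_pos hφz).le
    (mul_left_cancel₀ (pow_ne_zero 2 (norm_ne_zero_iff.mpr hd)) h)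

end Extremal

lemma eventually_deriv_ne_zero_of_injOn {f : ℂ → ℂ} {U : Set ℂ} (hU : IsOpen U)
    (hf : DifferentiableOn ℂ f U) (hinj : InjOn f U) {z₀ : ℂ} (hz₀ : z₀ ∈ U) :
    ∀ᶠ z in 𝓝[≠] z₀, deriv f z ≠ 0 := by
  refine ((hf.analyticOnNhd hU).deriv z₀ hz₀).eventually_eq_zero_or_eventually_ne_zero.resolve_left
    fun hzero => ?_
  obtain ⟨ε, hε, hball⟩ := Metric.eventually_nhds_iff_ball.mp (hzero.and (hU.eventually_mem hz₀))
  have hconst : ∀ z ∈ ball z₀ ε, f z = f z₀ := fun z hz =>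
    isOpen_ball.is_const_of_deriv_eq_zero (convex_ball z₀ ε).isPreconnected
      (hf.mono fun y hy => (hball y hy).2) (fun y hy => (hball y hy).1) hz (mem_ball_self hε)
  obtain ⟨z, hz, hne⟩ := ((eventually_nhdsWithin_of_eventually_nhds (ball_mem_nhds z₀ hε)).and
    (self_mem_nhdsWithin : {z₀}ᶜ ∈ 𝓝[≠] z₀)).exists
  exact hne (hinj (hball z hz).2 hz₀ (hconst z hz))

section Rotation

variable {φ : ℂ → ℂ}

/-- The Schwarz–Pick identity holds off the isolated zeros of `φ'`, hence at `0` by continuity. -/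
lemma norm_deriv_zero_eq_one (hφ : IsAnalyticSelfMap φ) (hinj : InjOn φ unitDisk)
    (h0 : φ 0 = 0)
    (h : ∀ z ∈ unitDisk, deriv φ z ≠ 0 → ‖deriv φ z‖ * (1 - ‖z‖ ^ 2) = 1 - ‖φ z‖ ^ 2) :
    ‖deriv φ 0‖ = 1 := by
  have h0mem : (0 : ℂ) ∈ unitDisk := mem_ball_self one_pos
  have hφ' : ContinuousAt (deriv φ) 0 :=
    ((hφ.1.analyticOnNhd isOpen_ball).deriv 0 h0mem).continuousAt
  have hφc : ContinuousAt φ 0 := (hφ.1.differentiableAt (isOpen_ball.mem_nhds h0mem)).continuousAt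
  have hev : (fun z => ‖deriv φ z‖ * (1 - ‖z‖ ^ 2)) =ᶠ[𝓝[≠] 0] fun z => 1 - ‖φ z‖ ^ 2 := by
    filter_upwards [eventually_deriv_ne_zero_of_injOn isOpen_ball hφ.1 hinj h0mem,
      eventually_nhdsWithin_of_eventually_nhds (isOpen_ball.mem_nhds h0mem)] with z hd hz
    exact h z hz hd
  simpa [h0] using ((ContinuousAt.eventuallyEq_nhds_iff_eventuallyEq_nhdsNE (by fun_prop)
    (by fun_prop)).mp hev).eq_of_nhds

lemma isRotation_of_norm_deriv_zero_eq_one (hφ : IsAnalyticSelfMap φ) (h0 : φ 0 = 0)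
    (h1 : ‖deriv φ 0‖ = 1) : IsRotation φ := by
  have hmaps : MapsTo φ unitDisk (closedBall (φ 0) 1) := by
    rw [h0]; exact hφ.2.mono_right ball_subset_closedBall
  have := Complex.affine_of_mapsTo_ball_of_norm_dslope_eq_div hφ.1 hmaps (mem_ball_self one_pos)
    (by rw [dslope_same, h1, div_one])
  refine ⟨deriv φ 0, h1, fun z hz => ?_⟩
  simpa [h0, mul_comm] using this hz

end Rotation

/-- For p>2, if C_φ is an isometry on B_p whose range contains a
univalent function, then φ is a rotation of the disk. -/
theorem isometry_range_univalent_rotation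
    (p : ℝ) (hp : 2 < p) (φ : ℂ → ℂ)
    (hφ : IsAnalyticSelfMap φ) (hiso : IsBesovIsometry p φ)
    (huniv : ∃ f : ℂ → ℂ, MemBesov p f ∧ Set.InjOn (f ∘ φ) unitDisk) :
    IsRotation φ := by
  obtain ⟨f, -, hf⟩ := huniv
  have hinj : InjOn φ unitDisk := hf.of_comp
  obtain ⟨h0, hsemi⟩ := hiso.apply_zero_eq_zero_and_besovSemi_eq hp.le
  have heqOn := besovIntegrand_eqOn_of_integral_eq hp.le hφ hinj
    (hiso id (memBesov_id hp.le)).1.2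
    (integral_besovIntegrand_eq_of_besovSemi_eq (by linarith) hsemi)
  refine isRotation_of_norm_deriv_zero_eq_one hφ h0 (norm_deriv_zero_eq_one hφ hinj h0 ?_)
  exact fun z hz hd => norm_deriv_mul_eq_of_besovIntegrand_eq hp hz (hφ.2 hz) hd (heqOn hz)
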